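/- Let p(x,y) = A x⁸ + B x⁶y² + C x⁴y⁴ + B x²y⁶ + A y⁸ be an even symmetric binary octic form. Then p is a finite sum of fourth powers of real binary quadratic forms if and only if either (A = B = 0 and C ≥ 0) or (A > 0, B ≥ −4A, and 36AC ≥ B² − 64AB − 56A²). In particular, x⁸ + αx⁴y⁴ + y⁸ is a finite sum of fourth powers of real binary quadratic forms if and only if α ≥ −14/9. -/

import Mathlib

open MvPolynomial

/-- The even symmetric binary octic `a x⁸ + b x⁶y² + c x⁴y⁴ + b x²y⁶ + a y⁸`. -/
noncomputable def evenOctic (a b c : ℝ) : MvPolynomial (Fin 2) ℝ :=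
  MvPolynomial.C a * X 0 ^ 8 + MvPolynomial.C b * X 0 ^ 6 * X 1 ^ 2 +
    MvPolynomial.C c * X 0 ^ 4 * X 1 ^ 4 + MvPolynomial.C b * X 0 ^ 2 * X 1 ^ 6 +
    MvPolynomial.C a * X 1 ^ 8

/-- `p` is a finite sum of fourth powers of real binary quadratic forms. -/
def IsSumFourthPowersQuadratics (p : MvPolynomial (Fin 2) ℝ) : Prop :=
  ∃ (s : ℕ) (h : Fin s → MvPolynomial (Fin 2) ℝ),
    (∀ k, (h k).IsHomogeneous 2) ∧ p = ∑ k, (h k) ^ 4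

/-!
Dehomogenizing at `y = 1` turns a sum of fourth powers of binary quadratic forms into a sum of
fourth powers of quadratic polynomials `αx² + βx + γ`. For necessity, consider the linear
functionals `u (p₀ + p₈) + v (p₂ + p₆) + w p₄` on coefficients: for `(u, v, w) = (1, 0, 0)`,
`(4, 1, 0)` and `(s² + 56, 64 - 2s, 72)` with `s ≥ -4` they are nonnegative on every
`(αx² + βx + γ)⁴`, by explicit sums of squares. The last one vanishes on the boundary octic with
`B = sA`, `36C = (s² - 64s - 56)A`, and taking `s = B/A` gives the quadratic inequality.
For sufficiency, if `6Aβ² = B + 4A` then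
`p = (A/2)((x² - y² + βxy)⁴ + (x² - y² - βxy)⁴) + t (xy)⁴`, and `t ≥ 0` is exactly that
inequality.
-/

def EvenOcticCriterion (a b c : ℝ) : Prop :=
  (a = 0 ∧ b = 0 ∧ 0 ≤ c) ∨
    (0 < a ∧ -(4 * a) ≤ b ∧ b ^ 2 - 64 * a * b - 56 * a ^ 2 ≤ 36 * a * c)

namespace IsSumFourthPowersQuadratics

theorem pow_four {h : MvPolynomial (Fin 2) ℝ} (hh : h.IsHomogeneous 2) :
    IsSumFourthPowersQuadratics (h ^ 4) :=
  ⟨1, fun _ => h, fun _ => hh, by simp⟩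

theorem add {p q : MvPolynomial (Fin 2) ℝ} (hp : IsSumFourthPowersQuadratics p)
    (hq : IsSumFourthPowersQuadratics q) : IsSumFourthPowersQuadratics (p + q) := by
  obtain ⟨s, h, hh, rfl⟩ := hp
  obtain ⟨t, g, hg, rfl⟩ := hq
  refine ⟨s + t, Fin.append h g, fun k => ?_, by rw [Fin.sum_univ_add]; simp⟩
  cases k using Fin.addCases <;> simp [hh, hg]

theorem C_mul {p : MvPolynomial (Fin 2) ℝ} (hp : IsSumFourthPowersQuadratics p) {c : ℝ}
    (hc : 0 ≤ c) : IsSumFourthPowersQuadratics (C c * p) := by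
  obtain ⟨s, h, hh, rfl⟩ := hp
  refine ⟨s, fun k => C (c ^ (4⁻¹ : ℝ)) * h k, fun k => (hh k).C_mul _, ?_⟩
  have hroot : (c ^ (4⁻¹ : ℝ)) ^ 4 = c := mod_cast Real.rpow_inv_natCast_pow hc four_ne_zero
  simp only [Finset.mul_sum, mul_pow, ← map_pow, hroot]

end IsSumFourthPowersQuadratics

theorem evenOctic_eq_add_pow_four {a b c β : ℝ} (hβ : 6 * a * β ^ 2 = b + 4 * a) :
    evenOctic a b c =
      C (a / 2) * ((X 0 ^ 2 - X 1 ^ 2 + C β * (X 0 * X 1)) ^ 4 +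
        (X 0 ^ 2 - X 1 ^ 2 - C β * (X 0 * X 1)) ^ 4) +
      C (c - 6 * a + 12 * a * β ^ 2 - a * β ^ 4) * (X 0 * X 1) ^ 4 := by
  refine MvPolynomial.funext fun x => ?_
  simp only [evenOctic, map_add, map_sub, map_mul, map_pow, eval_C, eval_X]
  linear_combination -(x 0 ^ 6 * x 1 ^ 2 + x 0 ^ 2 * x 1 ^ 6) * hβ

theorem isSumFourthPowersQuadratics_evenOctic {a b c β : ℝ} (ha : 0 ≤ a)
    (hβ : 6 * a * β ^ 2 = b + 4 * a) (hc : 0 ≤ c - 6 * a + 12 * a * β ^ 2 - a * β ^ 4) :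
    IsSumFourthPowersQuadratics (evenOctic a b c) := by
  have hxy : (X 0 * X 1 : MvPolynomial (Fin 2) ℝ).IsHomogeneous 2 :=
    (isHomogeneous_X ℝ 0).mul (isHomogeneous_X ℝ 1)
  have hsq : (X 0 ^ 2 - X 1 ^ 2 : MvPolynomial (Fin 2) ℝ).IsHomogeneous 2 :=
    (isHomogeneous_X_pow 0 2).sub (isHomogeneous_X_pow 1 2)
  rw [evenOctic_eq_add_pow_four hβ]
  refine .add (.C_mul (.add (.pow_four ?_) (.pow_four ?_)) (by linarith))
    (.C_mul (.pow_four hxy) hc)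
  · exact hsq.add (hxy.C_mul β)
  · exact hsq.sub (hxy.C_mul β)

theorem natDegree_aeval_X_one_le {R : Type*} [CommSemiring R] {h : MvPolynomial (Fin 2) R}
    {n : ℕ} (hh : h.IsHomogeneous n) :
    (aeval ![(Polynomial.X : Polynomial R), 1] h).natDegree ≤ n := by
  rw [h.as_sum, map_sum]
  refine Polynomial.natDegree_sum_le_of_forall_le _ _ fun m hm => ?_
  have hmn : m 0 + m 1 = n := by
    simpa [Finsupp.weight_apply, Finsupp.sum_fintype, Fin.sum_univ_two] using
      hh (mem_support_iff.mp hm)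
  simp only [MvPolynomial.aeval_monomial, Finsupp.prod_fintype _ _ (fun _ => pow_zero _),
    Fin.prod_univ_two, Matrix.cons_val_zero, Matrix.cons_val_one, one_pow, mul_one,
    Polynomial.algebraMap_eq]
  exact (Polynomial.natDegree_C_mul_X_pow_le _ _).trans (by omega)

noncomputable def octicPairing (u v w : ℝ) : Polynomial ℝ →ₗ[ℝ] ℝ :=
  u • (Polynomial.lcoeff ℝ 0 + Polynomial.lcoeff ℝ 8) +
    v • (Polynomial.lcoeff ℝ 2 + Polynomial.lcoeff ℝ 6) + w • Polynomial.lcoeff ℝ 4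

theorem octicPairing_apply (u v w : ℝ) (q : Polynomial ℝ) :
    octicPairing u v w q =
      u * (q.coeff 0 + q.coeff 8) + v * (q.coeff 2 + q.coeff 6) + w * q.coeff 4 :=
  rfl

theorem octicPairing_aeval_evenOctic (u v w a b c : ℝ) :
    octicPairing u v w (aeval ![Polynomial.X, 1] (evenOctic a b c)) =
      2 * u * a + 2 * v * b + w * c := by
  simp [octicPairing_apply, evenOctic, Polynomial.coeff_X_pow, Polynomial.coeff_C_mul]
  ring

theorem octicPairing_quadratic_pow_four (u v w α β γ : ℝ) :
    octicPairing u v w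
        ((Polynomial.C α * Polynomial.X ^ 2 + Polynomial.C β * Polynomial.X +
          Polynomial.C γ) ^ 4) =
      u * (α ^ 4 + γ ^ 4) +
        v * (6 * α ^ 2 * β ^ 2 + 4 * α ^ 3 * γ + 6 * β ^ 2 * γ ^ 2 + 4 * α * γ ^ 3) +
          w * (β ^ 4 + 12 * α * β ^ 2 * γ + 6 * α ^ 2 * γ ^ 2) := by
  have expand : (Polynomial.C α * Polynomial.X ^ 2 + Polynomial.C β * Polynomial.X +
      Polynomial.C γ) ^ 4 =
      Polynomial.C (α ^ 4) * Polynomial.X ^ 8 + Polynomial.C (4 * α ^ 3 * β) * Polynomial.X ^ 7 +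
      Polynomial.C (6 * α ^ 2 * β ^ 2 + 4 * α ^ 3 * γ) * Polynomial.X ^ 6 +
      Polynomial.C (4 * α * β ^ 3 + 12 * α ^ 2 * β * γ) * Polynomial.X ^ 5 +
      Polynomial.C (β ^ 4 + 12 * α * β ^ 2 * γ + 6 * α ^ 2 * γ ^ 2) * Polynomial.X ^ 4 +
      Polynomial.C (4 * β ^ 3 * γ + 12 * α * β * γ ^ 2) * Polynomial.X ^ 3 +
      Polynomial.C (6 * β ^ 2 * γ ^ 2 + 4 * α * γ ^ 3) * Polynomial.X ^ 2 +
      Polynomial.C (4 * β * γ ^ 3) * Polynomial.X ^ 1 +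
      Polynomial.C (γ ^ 4) * Polynomial.X ^ 0 := by
    simp only [map_add, map_mul, map_pow, map_ofNat]
    ring
  simp only [octicPairing_apply, expand, Polynomial.coeff_add, Polynomial.coeff_C_mul_X_pow]
  norm_num
  ring

theorem IsSumFourthPowersQuadratics.octicPairing_nonneg {a b c u v w : ℝ}
    (hp : IsSumFourthPowersQuadratics (evenOctic a b c))
    (huvw : ∀ α β γ : ℝ, 0 ≤ u * (α ^ 4 + γ ^ 4) +
      v * (6 * α ^ 2 * β ^ 2 + 4 * α ^ 3 * γ + 6 * β ^ 2 * γ ^ 2 + 4 * α * γ ^ 3) +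
        w * (β ^ 4 + 12 * α * β ^ 2 * γ + 6 * α ^ 2 * γ ^ 2)) :
    0 ≤ 2 * u * a + 2 * v * b + w * c := by
  obtain ⟨s, h, hh, hp⟩ := hp
  rw [← octicPairing_aeval_evenOctic u v w, hp, map_sum, map_sum]
  refine Finset.sum_nonneg fun k _ => ?_
  rw [map_pow, Polynomial.eq_quadratic_of_degree_le_two
    (Polynomial.natDegree_le_iff_degree_le.mp (natDegree_aeval_X_one_le (hh k))),
    octicPairing_quadratic_pow_four]
  exact huvw _ _ _

theorem four_mul_add_quartic_coeffs_nonneg (α β γ : ℝ) :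
    0 ≤ 4 * (α ^ 4 + γ ^ 4) +
      (6 * α ^ 2 * β ^ 2 + 4 * α ^ 3 * γ + 6 * β ^ 2 * γ ^ 2 + 4 * α * γ ^ 3) := by
  nlinarith [sq_nonneg (β * α), sq_nonneg (β * γ), sq_nonneg ((α + γ) * (α - γ)),
    sq_nonneg ((α + γ) ^ 2)]

theorem tangent_quartic_coeffs_nonneg {s : ℝ} (hs : -4 ≤ s) (α β γ : ℝ) :
    0 ≤ (s ^ 2 + 56) * (α ^ 4 + γ ^ 4) +
      (64 - 2 * s) * (6 * α ^ 2 * β ^ 2 + 4 * α ^ 3 * γ + 6 * β ^ 2 * γ ^ 2 + 4 * α * γ ^ 3) +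
        72 * (β ^ 4 + 12 * α * β ^ 2 * γ + 6 * α ^ 2 * γ ^ 2) := by
  rcases le_or_gt s 12 with h12 | h12
  · have t1 : 0 ≤ ((s + 4) * (α - γ) ^ 2 + 3 * (s - 4) * (α + γ) ^ 2 - 24 * β ^ 2) ^ 2 :=
      sq_nonneg _
    have t2 : 0 ≤ (12 - s) * ((s + 4) * (α + γ) ^ 4) :=
      mul_nonneg (by linarith) (mul_nonneg (by linarith) (by positivity))
    have t3 : 0 ≤ (s + 28) * ((α + γ) ^ 2 * β ^ 2) := mul_nonneg (by linarith) (by positivity)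
    nlinarith [t1, t2, t3]
  rcases le_or_gt s 68 with h68 | h68
  · have t1 : 0 ≤ ((s + 4) * (α - γ) ^ 2 - 24 * β ^ 2) ^ 2 := sq_nonneg _
    have t2 : 0 ≤ ((s - 4) ^ 2 + 512) * (α + γ) ^ 4 := by positivity
    have t3 : 0 ≤ (6 * s ^ 2 - 96) * ((α + γ) * (α - γ)) ^ 2 :=
      mul_nonneg (by nlinarith) (sq_nonneg _)
    have t4 : 0 ≤ (3264 - 48 * s) * ((α + γ) * β) ^ 2 := mul_nonneg (by linarith) (sq_nonneg _)
    nlinarith [t1, t2, t3, t4]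
  · have t1 : 0 ≤ ((s - 68) * (α + γ) ^ 2 + (s + 4) * (α - γ) ^ 2 - 24 * β ^ 2) ^ 2 :=
      sq_nonneg _
    have t2 : 0 ≤ 128 * ((s - 32) * (α + γ) ^ 4) :=
      mul_nonneg (by norm_num) (mul_nonneg (by linarith) (by positivity))
    have t3 : 0 ≤ (4 * s ^ 2 + 128 * s + 448) * ((α + γ) * (α - γ)) ^ 2 :=
      mul_nonneg (by nlinarith) (sq_nonneg _)
    nlinarith [t1, t2, t3]

theorem evenOcticCriterion_of_pairings_nonneg {a b c : ℝ} (ha : 0 ≤ a) (hb : 0 ≤ 8 * a + 2 * b)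
    (hs : ∀ s : ℝ, -4 ≤ s → 0 ≤ 2 * (s ^ 2 + 56) * a + 2 * (64 - 2 * s) * b + 72 * c) :
    EvenOcticCriterion a b c := by
  rcases ha.eq_or_lt with rfl | ha
  · have hb0 : b = 0 := by
      -- otherwise the pairing with `s = 32 + 18 (|c| + 1) / b` is negative
      refine le_antisymm (not_lt.mp fun hb' => ?_) (by linarith)
      have hq : 0 ≤ 18 * (|c| + 1) / b := by positivity
      have h := hs (32 + 18 * (|c| + 1) / b) (by linarith)
      have hlin : (64 - 2 * (32 + 18 * (|c| + 1) / b)) * b = -36 * (|c| + 1) := by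
        field_simp; ring
      linarith [le_abs_self c]
    subst hb0
    exact .inl ⟨rfl, rfl, by linarith [hs 0 (by norm_num)]⟩
  · refine .inr ⟨ha, by linarith, ?_⟩
    have h := hs (b / a) (by rw [le_div_iff₀ ha]; linarith)
    have hexp : a * (2 * ((b / a) ^ 2 + 56) * a + 2 * (64 - 2 * (b / a)) * b + 72 * c) =
        -2 * b ^ 2 + 112 * a ^ 2 + 128 * a * b + 72 * a * c := by
      field_simp
      ring
    nlinarith [mul_nonneg ha.le h]

theorem IsSumFourthPowersQuadratics.evenOcticCriterion {a b c : ℝ}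
    (hp : IsSumFourthPowersQuadratics (evenOctic a b c)) : EvenOcticCriterion a b c := by
  refine evenOcticCriterion_of_pairings_nonneg ?_ ?_ fun s hs' => ?_
  · linarith [hp.octicPairing_nonneg (u := 1) (v := 0) (w := 0) fun α β γ => by
      simp only [zero_mul, add_zero, one_mul]; positivity]
  · linarith [hp.octicPairing_nonneg (u := 4) (v := 1) (w := 0) fun α β γ => by
      linarith [four_mul_add_quartic_coeffs_nonneg α β γ]]
  · linarith [hp.octicPairing_nonneg (u := s ^ 2 + 56) (v := 64 - 2 * s) (w := 72)
      (tangent_quartic_coeffs_nonneg hs')]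

theorem EvenOcticCriterion.isSumFourthPowersQuadratics {a b c : ℝ}
    (h : EvenOcticCriterion a b c) : IsSumFourthPowersQuadratics (evenOctic a b c) := by
  rcases h with ⟨rfl, rfl, hc⟩ | ⟨ha, hb, hc⟩
  · exact isSumFourthPowersQuadratics_evenOctic (β := 0) le_rfl (by ring) (by simpa using hc)
  · set B := (b + 4 * a) / (6 * a) with hB_def
    have hB : 0 ≤ B := div_nonneg (by linarith) (by linarith)
    have hβ : √B ^ 2 = B := Real.sq_sqrt hB
    have h6 : 6 * a * B = b + 4 * a := by rw [hB_def]; field_simp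
    have h36 : 36 * a * (c - 6 * a + 12 * a * B - a * B ^ 2) =
        36 * a * c + 64 * a * b + 56 * a ^ 2 - b ^ 2 := by
      rw [hB_def]; field_simp; ring
    refine isSumFourthPowersQuadratics_evenOctic (β := √B) ha.le (by rw [hβ, h6]) ?_
    rw [show √B ^ 4 = (√B ^ 2) ^ 2 by ring, hβ]
    nlinarith

/-- An even symmetric binary octic `A x⁸ + B x⁶y² + C x⁴y⁴ + B x²y⁶ + A y⁸` is a finite
sum of fourth powers of binary quadratic forms iff `A = B = 0 ∧ C ≥ 0`, or
`A > 0 ∧ B ≥ −4A ∧ 36AC ≥ B² − 64AB − 56A²`. In particular `x⁸ + αx⁴y⁴ + y⁸` is such a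
sum iff `α ≥ −14/9`. -/
theorem evenOctic_sum_fourth_powers_iff :
    (∀ a b c : ℝ,
      IsSumFourthPowersQuadratics (evenOctic a b c) ↔
        ((a = 0 ∧ b = 0 ∧ 0 ≤ c) ∨
          (0 < a ∧ -(4 * a) ≤ b ∧ b ^ 2 - 64 * a * b - 56 * a ^ 2 ≤ 36 * a * c))) ∧
    (∀ α : ℝ,
      IsSumFourthPowersQuadratics (evenOctic 1 0 α) ↔ -(14 / 9) ≤ α) := by
  have main : ∀ a b c : ℝ,
      IsSumFourthPowersQuadratics (evenOctic a b c) ↔ EvenOcticCriterion a b c :=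
    fun _ _ _ => ⟨fun hp => hp.evenOcticCriterion, fun h => h.isSumFourthPowersQuadratics⟩
  refine ⟨main, fun α => (main 1 0 α).trans
    ⟨?_, fun hα => .inr ⟨one_pos, by norm_num, by linarith⟩⟩⟩
  rintro (⟨h, -, -⟩ | ⟨-, -, h⟩)
  · norm_num at h
  · linarith
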